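/- arXiv:1310.3865 — 3 statements merged into one kernel-verified Lean document; each statement's English description precedes it below -/
import Mathlib

section
/- Let 0 < α < 2n and let K_α satisfy the regularity estimate |K_α(x+h,y,z) − K_α(x,y,z)| ≤ C|h|(|x−y|+|x−z|)^{α−2n−1}. Then for every δ > 0, t ∈ ℝ^n, bounded compactly supported b, and bounded compactly supported f, g, the quantity B(x) = ∫∫_{|x−y|+|x−z|>δ} (b(x+t)−b(y))(K_α(x+t,y,z)−K_α(x,y,z)) f(y) g(z) dy dz satisfies |B(x)| ≤ C' (|t|/δ) ‖b‖_∞ 𝓜_α(f,g)(x), where 𝓜_α is the bilinear fractional maximal operator. -/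
open Real MeasureTheory ENNReal

/-- An axis-parallel cube with center `c` and half side-length `h`. -/
def cube {n : ℕ} (c : EuclideanSpace ℝ (Fin n)) (h : ℝ) :
    Set (EuclideanSpace ℝ (Fin n)) :=
  {y | ∀ i, |y i - c i| ≤ h}

/-- The bilinear fractional maximal function `𝓜_α(f,g)(x)` (ℝ≥0∞-valued). -/
noncomputable def biMaximal {n : ℕ} (α : ℝ)
    (f g : EuclideanSpace ℝ (Fin n) → ℝ) (x : EuclideanSpace ℝ (Fin n)) : ℝ≥0∞ :=
  ⨆ (c : EuclideanSpace ℝ (Fin n)) (h : ℝ) (_ : 0 < h) (_ : x ∈ cube c h),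
    (volume (cube c h)) ^ (α / n) *
      ((∫⁻ y in cube c h, ENNReal.ofReal |f y|) / volume (cube c h)) *
      ((∫⁻ z in cube c h, ENNReal.ofReal |g z|) / volume (cube c h))

lemma cube_eq_preimage {n : ℕ} (c : EuclideanSpace ℝ (Fin n)) (h : ℝ) :
    cube c h = ((MeasurableEquiv.toLp 2 (Fin n → ℝ)).symm) ⁻¹'
      (Set.univ.pi fun i => Set.Icc (c i - h) (c i + h)) := by
  ext y
  simp only [cube, Set.mem_setOf_eq, Set.mem_preimage, Set.mem_pi, Set.mem_univ,
    true_implies, Set.mem_Icc]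
  have hcoe : ∀ i, ((MeasurableEquiv.toLp 2 (Fin n → ℝ)).symm) y i = y i := fun i => rfl
  constructor
  · intro hy i
    rw [hcoe i]
    have := abs_sub_le_iff.mp (hy i)
    constructor <;> linarith [this.1, this.2]
  · intro hy i
    have h2 := hy i
    rw [hcoe i] at h2
    rw [abs_sub_le_iff]
    constructor <;> linarith [h2.1, h2.2]

lemma volume_cube {n : ℕ} (c : EuclideanSpace ℝ (Fin n)) (h : ℝ) :
    volume (cube c h) = ENNReal.ofReal (2 * h) ^ n := by
  rw [cube_eq_preimage]
  rw [(EuclideanSpace.volume_preserving_symm_measurableEquiv_toLp (Fin n)).measure_preimage]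
  · rw [volume_pi_pi]
    simp [Real.volume_Icc]
    ring_nf
    rw [ENNReal.ofReal_mul' (by norm_num), ENNReal.ofReal_ofNat, mul_pow]
  · exact (MeasurableSet.univ_pi fun i => measurableSet_Icc).nullMeasurableSet

lemma coord_le_norm {n : ℕ} (v : EuclideanSpace ℝ (Fin n)) (i : Fin n) :
    |v i| ≤ ‖v‖ := by
  rw [EuclideanSpace.norm_eq v]
  have h1 : |v i| = Real.sqrt (‖v i‖^2) := by
    rw [Real.sqrt_sq_eq_abs]; simp
  rw [h1]
  apply Real.sqrt_le_sqrt
  exact Finset.single_le_sum (f := fun j => ‖v j‖^2) (fun j _ => sq_nonneg _)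
    (Finset.mem_univ i)

lemma biMax_lower {n : ℕ} (α : ℝ) (f g : EuclideanSpace ℝ (Fin n) → ℝ)
    (x : EuclideanSpace ℝ (Fin n)) (h : ℝ) (hh : 0 < h) :
    (volume (cube x h)) ^ (α / n) *
      ((∫⁻ y in cube x h, ENNReal.ofReal |f y|) / volume (cube x h)) *
      ((∫⁻ z in cube x h, ENNReal.ofReal |g z|) / volume (cube x h)) ≤
    biMaximal α f g x := by
  have hx : x ∈ cube x h := fun i => by simp [hh.le]
  exact le_iSup_of_le x (le_iSup_of_le h (le_iSup_of_le hh (le_iSup_of_le hx le_rfl)))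

lemma key_mul_le {n : ℕ} (hn : 0 < n) (α : ℝ) (f g : EuclideanSpace ℝ (Fin n) → ℝ)
    (x : EuclideanSpace ℝ (Fin n)) (h : ℝ) (hh : 0 < h) :
    (∫⁻ y in cube x h, ENNReal.ofReal |f y|) *
      (∫⁻ z in cube x h, ENNReal.ofReal |g z|) ≤
    (volume (cube x h)) ^ (2 - α / n) * biMaximal α f g x := by
  set V := volume (cube x h) with hV
  have hV0 : V ≠ 0 := by
    rw [hV, volume_cube]
    positivity
  have hVtop : V ≠ ⊤ := by
    rw [hV, volume_cube]
    exact pow_ne_top ofReal_ne_top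
  set If := ∫⁻ y in cube x h, ENNReal.ofReal |f y| with hIf
  set Ig := ∫⁻ z in cube x h, ENNReal.ofReal |g z| with hIg
  have e1 : V ^ (2 - α / (n:ℝ)) * V ^ (α / (n:ℝ)) = V * V := by
    rw [← ENNReal.rpow_add _ _ hV0 hVtop]
    have : (2 - α / (n:ℝ) + α / n) = (2:ℝ) := by ring
    rw [this, show (2:ℝ) = ((2:ℕ):ℝ) by norm_num, ENNReal.rpow_natCast, sq]
  have key : V ^ (2 - α / (n:ℝ)) * (V ^ (α / (n:ℝ)) * (If / V) * (Ig / V)) = If * Ig := by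
    calc V ^ (2 - α / (n:ℝ)) * (V ^ (α / (n:ℝ)) * (If / V) * (Ig / V))
        = (V ^ (2 - α / (n:ℝ)) * V ^ (α / (n:ℝ))) * (If / V) * (Ig / V) := by ring
      _ = (V * V) * (If / V) * (Ig / V) := by rw [e1]
      _ = (If / V * V) * (Ig / V * V) := by ring
      _ = If * Ig := by
          rw [ENNReal.div_mul_cancel hV0 hVtop, ENNReal.div_mul_cancel hV0 hVtop]
  rw [← key]
  exact mul_le_mul_right (biMax_lower α f g x h hh) _

lemma real_coef (n : ℕ) (α δ : ℝ) (hδ : 0 < δ) (k : ℕ) :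
    ((2:ℝ)^k * δ) ^ (α - 2*n - 1) * ((2:ℝ)^(k+2) * δ) ^ (2*(n:ℝ) - α)
    = (2:ℝ)^(2*(2*(n:ℝ) - α)) * δ⁻¹ * ((2:ℝ)⁻¹)^k := by
  set e := α - 2*(n:ℝ) - 1 with he
  set m := 2*(n:ℝ) - α with hm
  have h2 : (0:ℝ) < 2 := by norm_num
  have hp1 : (0:ℝ) ≤ (2:ℝ)^k := by positivity
  have hp2 : (0:ℝ) ≤ (2:ℝ)^(k+2) := by positivity
  rw [Real.mul_rpow hp1 hδ.le, Real.mul_rpow hp2 hδ.le]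
  rw [← Real.rpow_natCast (2:ℝ) k, ← Real.rpow_natCast (2:ℝ) (k+2)]
  rw [← Real.rpow_mul h2.le, ← Real.rpow_mul h2.le]
  have comb : (2:ℝ) ^ ((k:ℝ) * e) * δ ^ e * ((2:ℝ) ^ (((k:ℝ)+2) * m) * δ ^ m)
      = (2:ℝ) ^ ((k:ℝ)*e + ((k:ℝ)+2)*m) * δ ^ (e + m) := by
    rw [Real.rpow_add h2, Real.rpow_add hδ]; ring
  push_cast
  rw [comb]
  have he1 : e + m = -1 := by rw [he, hm]; ring
  have he2 : (k:ℝ)*e + ((k:ℝ)+2)*m = 2*m + (-(k:ℝ)) := by rw [he, hm]; ring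
  rw [he1, he2, Real.rpow_add h2, Real.rpow_neg_one, Real.rpow_neg h2.le,
    Real.rpow_natCast, inv_pow]
  ring

/-- Estimate for the term `B` in the continuity part of the compactness proof. -/
theorem term_B_estimate (n : ℕ) (hn : 0 < n) (α : ℝ)
    (hα : 0 < α) (hα2 : α < 2 * n) :
    ∃ C' : ℝ, 0 < C' ∧
    ∀ (C : ℝ) (K : EuclideanSpace ℝ (Fin n) → EuclideanSpace ℝ (Fin n) →
        EuclideanSpace ℝ (Fin n) → ℝ),
      0 < C →
      (∀ x h y z, |K (x + h) y z - K x y z| ≤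
        C * ‖h‖ * (‖x - y‖ + ‖x - z‖) ^ (α - 2 * n - 1)) →
      ∀ (δ : ℝ) (t : EuclideanSpace ℝ (Fin n))
        (b f g : EuclideanSpace ℝ (Fin n) → ℝ) (Mb : ℝ),
        0 < δ →
        Measurable b → Measurable f → Measurable g →
        (∀ x, |b x| ≤ Mb) → HasCompactSupport b →
        (∃ M, ∀ x, |f x| ≤ M) → HasCompactSupport f →
        (∃ M, ∀ x, |g x| ≤ M) → HasCompactSupport g →
        ∀ x, ENNReal.ofReal
            |∫ y, ∫ z, (if δ < ‖x - y‖ + ‖x - z‖ then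
                (b (x + t) - b y) * (K (x + t) y z - K x y z) * f y * g z
              else 0)| ≤
          ENNReal.ofReal (C' * C * (‖t‖ / δ) * Mb) * biMaximal α f g x := by
  refine ⟨2 ^ (4 * n + 2), by positivity, ?_⟩
  intro C K hC hK δ t b f g Mb hδ hb hf hg hbM hbs hfM hfs hgM hgs x
  have hMb0 : 0 ≤ Mb := le_trans (abs_nonneg _) (hbM 0)
  set e : ℝ := α - 2 * (n:ℝ) - 1 with he
  have he_neg : e ≤ 0 := by
    rw [he]; push_cast; nlinarith
  set κ : ℝ := 2 * Mb * (C * ‖t‖) with hκ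
  have hκ0 : 0 ≤ κ := by positivity
  set s : (EuclideanSpace ℝ (Fin n) × EuclideanSpace ℝ (Fin n)) → ℝ :=
    fun p => ‖x - p.1‖ + ‖x - p.2‖ with hs
  have hs_cont : Continuous s := by
    apply Continuous.add
    · exact (continuous_const.sub continuous_fst).norm
    · exact (continuous_const.sub continuous_snd).norm
  set S : Set (EuclideanSpace ℝ (Fin n) × EuclideanSpace ℝ (Fin n)) :=
    {p | δ < s p} with hSdef
  have hS : MeasurableSet S := (isOpen_lt continuous_const hs_cont).measurableSet
  set G : (EuclideanSpace ℝ (Fin n) × EuclideanSpace ℝ (Fin n)) → ℝ≥0∞ :=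
    fun p => ENNReal.ofReal (κ * Real.exp (Real.log (s p) * e)) * ENNReal.ofReal |f p.1| *
      ENNReal.ofReal |g p.2| with hGdef
  have hGeq : ∀ p, 0 < s p → Real.exp (Real.log (s p) * e) = s p ^ e := by
    intro p hp
    rw [Real.rpow_def_of_pos hp]
  have hG : Measurable G := by
    rw [hGdef]
    apply Measurable.fun_mul
    apply Measurable.fun_mul
    · exact (measurable_const.mul
        (((Real.measurable_log.comp hs_cont.measurable).mul measurable_const).exp)).ennreal_ofReal
    · exact ((hf.comp measurable_fst).abs).ennreal_ofReal
    · exact ((hg.comp measurable_snd).abs).ennreal_ofReal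
  -- pointwise bound
  have hpoint : ∀ y z : EuclideanSpace ℝ (Fin n),
      ENNReal.ofReal |if δ < ‖x - y‖ + ‖x - z‖ then
          (b (x + t) - b y) * (K (x + t) y z - K x y z) * f y * g z
        else 0| ≤ S.indicator G (y, z) := by
    intro y z
    by_cases hc : δ < ‖x - y‖ + ‖x - z‖
    · rw [if_pos hc]
      have hmem : (y, z) ∈ S := hc
      rw [Set.indicator_of_mem hmem]
      have hs0 : 0 < s (y, z) := lt_trans hδ hc
      have hb2 : |b (x + t) - b y| ≤ 2 * Mb := by
        calc |b (x + t) - b y| ≤ |b (x + t)| + |b y| := abs_sub _ _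
          _ ≤ Mb + Mb := add_le_add (hbM _) (hbM _)
          _ = 2 * Mb := by ring
      have hKb : |K (x + t) y z - K x y z| ≤ C * ‖t‖ * s (y, z) ^ e := hK x t y z
      have habs : |(b (x + t) - b y) * (K (x + t) y z - K x y z) * f y * g z|
          ≤ κ * s (y, z) ^ e * |f y| * |g z| := by
        rw [abs_mul, abs_mul, abs_mul]
        have h1 : |b (x + t) - b y| * |K (x + t) y z - K x y z|
            ≤ (2 * Mb) * (C * ‖t‖ * s (y, z) ^ e) := by
          apply mul_le_mul hb2 hKb (abs_nonneg _) (by positivity)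
        calc |b (x + t) - b y| * |K (x + t) y z - K x y z| * |f y| * |g z|
            ≤ (2 * Mb) * (C * ‖t‖ * s (y, z) ^ e) * |f y| * |g z| := by
              apply mul_le_mul_of_nonneg_right _ (abs_nonneg _)
              exact mul_le_mul_of_nonneg_right h1 (abs_nonneg _)
          _ = κ * s (y, z) ^ e * |f y| * |g z| := by rw [hκ]; ring
      calc ENNReal.ofReal |(b (x + t) - b y) * (K (x + t) y z - K x y z) * f y * g z|
          ≤ ENNReal.ofReal (κ * s (y, z) ^ e * |f y| * |g z|) :=
            ENNReal.ofReal_le_ofReal habs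
        _ = G (y, z) := by
            rw [hGdef]
            simp only []
            rw [hGeq (y, z) hs0]
            rw [ENNReal.ofReal_mul (by positivity), ENNReal.ofReal_mul (by positivity)]
    · rw [if_neg hc]
      simp
  -- Step A: bound by iterated lintegral
  have stepA : ENNReal.ofReal
      |∫ y, ∫ z, (if δ < ‖x - y‖ + ‖x - z‖ then
          (b (x + t) - b y) * (K (x + t) y z - K x y z) * f y * g z
        else 0)| ≤ ∫⁻ y, ∫⁻ z, S.indicator G (y, z) := by
    have h1 : ∀ r : ℝ, ENNReal.ofReal |r| = (‖r‖₊ : ℝ≥0∞) := by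
      intro r
      rw [← Real.norm_eq_abs, ofReal_norm, enorm_eq_nnnorm]
    rw [h1]
    calc (‖∫ y, ∫ z, (if δ < ‖x - y‖ + ‖x - z‖ then
            (b (x + t) - b y) * (K (x + t) y z - K x y z) * f y * g z
          else 0)‖₊ : ℝ≥0∞)
        ≤ ∫⁻ y, (‖∫ z, (if δ < ‖x - y‖ + ‖x - z‖ then
            (b (x + t) - b y) * (K (x + t) y z - K x y z) * f y * g z
          else 0)‖₊ : ℝ≥0∞) := enorm_integral_le_lintegral_enorm _
      _ ≤ ∫⁻ y, ∫⁻ z, (‖(if δ < ‖x - y‖ + ‖x - z‖ then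
            (b (x + t) - b y) * (K (x + t) y z - K x y z) * f y * g z
          else 0)‖₊ : ℝ≥0∞) := by
            apply lintegral_mono
            intro y
            exact enorm_integral_le_lintegral_enorm _
      _ ≤ ∫⁻ y, ∫⁻ z, S.indicator G (y, z) := by
            apply lintegral_mono; intro y
            apply lintegral_mono; intro z
            have := hpoint y z
            rwa [h1] at this
  -- Step C: iterated to product integral restricted to S
  have stepC : ∫⁻ y, ∫⁻ z, S.indicator G (y, z)
      = ∫⁻ p in S, G p ∂((volume : Measure (EuclideanSpace ℝ (Fin n))).prod volume) := by
    rw [lintegral_lintegral (f := fun y z => S.indicator G (y, z))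
      (by exact (hG.indicator hS).aemeasurable)]
    simp only [Prod.mk.eta]
    rw [lintegral_indicator hS]
  -- annuli
  set A : ℕ → Set (EuclideanSpace ℝ (Fin n) × EuclideanSpace ℝ (Fin n)) :=
    fun k => {p | 2^k * δ < s p ∧ s p ≤ 2^(k+1) * δ} with hAdef
  have hcover : S ⊆ ⋃ k, A k := by
    intro p hp
    have hps : δ < s p := hp
    have hex : ∃ m : ℕ, s p ≤ 2^(m+1) * δ := by
      obtain ⟨m, hm⟩ := pow_unbounded_of_one_lt (s p / δ) (one_lt_two (α := ℝ))
      refine ⟨m, ?_⟩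
      have : s p < 2 ^ m * δ := by
        rw [div_lt_iff₀ hδ] at hm
        exact hm
      have h2 : (2:ℝ)^m * δ ≤ 2^(m+1) * δ := by
        apply mul_le_mul_of_nonneg_right _ hδ.le
        apply pow_le_pow_right₀ (by norm_num) (by omega)
      linarith
    set k := Nat.find hex with hk
    rw [Set.mem_iUnion]
    refine ⟨k, ?_, Nat.find_spec hex⟩
    match hk2 : k with
    | 0 => simpa using hps
    | j + 1 =>
      have hmin := Nat.find_min hex (by omega : j < k)
      push_neg at hmin
      rw [hk2] at *
      exact hmin
  have stepF : ∫⁻ p in S, G p ∂((volume : Measure (EuclideanSpace ℝ (Fin n))).prod volume)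
      ≤ ∑' k, ∫⁻ p in A k, G p
          ∂((volume : Measure (EuclideanSpace ℝ (Fin n))).prod volume) :=
    (lintegral_mono_set hcover).trans (lintegral_iUnion_le _ _)
  set B := biMaximal α f g x with hB
  set c2 : ℝ≥0∞ := ENNReal.ofReal (κ * ((2:ℝ)^(2*(2*(n:ℝ)-α)) * δ⁻¹)) with hc2
  -- Step G: per-annulus estimate
  have stepG : ∀ k : ℕ, ∫⁻ p in A k, G p
      ∂((volume : Measure (EuclideanSpace ℝ (Fin n))).prod volume)
      ≤ c2 * (2⁻¹ : ℝ≥0∞)^k * B := by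
    intro k
    set hk : ℝ := 2^(k+1) * δ with hhk
    have hhk0 : 0 < hk := by positivity
    set Q := cube x hk with hQ
    set c1 : ℝ≥0∞ := ENNReal.ofReal (κ * ((2:ℝ)^k * δ) ^ e) with hc1
    set F1 : EuclideanSpace ℝ (Fin n) → ℝ≥0∞ := fun y => ENNReal.ofReal |f y| with hF1
    set F2 : EuclideanSpace ℝ (Fin n) → ℝ≥0∞ := fun z => ENNReal.ofReal |g z| with hF2
    have hstep1 : ∫⁻ p in A k, G p
        ∂((volume : Measure (EuclideanSpace ℝ (Fin n))).prod volume)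
        ≤ ∫⁻ p in A k, c1 * (F1 p.1 * F2 p.2)
        ∂((volume : Measure (EuclideanSpace ℝ (Fin n))).prod volume) := by
      apply setLIntegral_mono
      · exact measurable_const.mul
          (((hf.comp measurable_fst).abs.ennreal_ofReal).mul
            ((hg.comp measurable_snd).abs.ennreal_ofReal))
      · intro p hp
        have h1 : (0:ℝ) < 2^k * δ := by positivity
        have h2 : (2:ℝ)^k * δ < s p := hp.1
        have hsp : 0 < s p := h1.trans h2
        have hr : s p ^ e ≤ ((2:ℝ)^k * δ) ^ e :=
          Real.rpow_le_rpow_of_nonpos h1 h2.le he_neg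
        have hg1 : G p = ENNReal.ofReal (κ * s p ^ e) * (F1 p.1 * F2 p.2) := by
          rw [hGdef]
          simp only []
          rw [hGeq p hsp, mul_assoc]
        rw [hg1]
        apply mul_le_mul_left
        exact ENNReal.ofReal_le_ofReal (mul_le_mul_of_nonneg_left hr hκ0)
    have hsub : A k ⊆ Q ×ˢ Q := by
      intro p hp
      have hsle : s p ≤ hk := hp.2
      have hn1 : ‖x - p.1‖ ≤ hk := by
        have : ‖x - p.1‖ ≤ s p := le_add_of_nonneg_right (norm_nonneg _)
        linarith
      have hn2 : ‖x - p.2‖ ≤ hk := by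
        have : ‖x - p.2‖ ≤ s p := le_add_of_nonneg_left (norm_nonneg _)
        linarith
      constructor
      · intro i
        have hco := coord_le_norm (p.1 - x) i
        have heq : (p.1 - x) i = p.1 i - x i := rfl
        rw [heq] at hco
        rw [norm_sub_rev] at hco
        linarith
      · intro i
        have hco := coord_le_norm (p.2 - x) i
        have heq : (p.2 - x) i = p.2 i - x i := rfl
        rw [heq] at hco
        rw [norm_sub_rev] at hco
        linarith
    have hstep2 : ∫⁻ p in A k, c1 * (F1 p.1 * F2 p.2)
        ∂((volume : Measure (EuclideanSpace ℝ (Fin n))).prod volume)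
        ≤ ∫⁻ p in Q ×ˢ Q, c1 * (F1 p.1 * F2 p.2)
        ∂((volume : Measure (EuclideanSpace ℝ (Fin n))).prod volume) :=
      lintegral_mono_set hsub
    have hstep3 : ∫⁻ p in Q ×ˢ Q, c1 * (F1 p.1 * F2 p.2)
        ∂((volume : Measure (EuclideanSpace ℝ (Fin n))).prod volume)
        = c1 * ((∫⁻ y in Q, ENNReal.ofReal |f y|) * (∫⁻ z in Q, ENNReal.ofReal |g z|)) := by
      rw [← Measure.prod_restrict, lintegral_const_mul' _ _ ENNReal.ofReal_ne_top,
        lintegral_prod_mul (hf.abs.ennreal_ofReal.aemeasurable)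
          (hg.abs.ennreal_ofReal.aemeasurable)]
    have hstep4 : c1 * ((∫⁻ y in Q, ENNReal.ofReal |f y|) * (∫⁻ z in Q, ENNReal.ofReal |g z|))
        ≤ c1 * ((volume Q) ^ (2 - α/(n:ℝ)) * B) :=
      mul_le_mul_right (key_mul_le hn α f g x hk hhk0) _
    have hcoef : c1 * (volume Q) ^ (2 - α/(n:ℝ)) = c2 * (2⁻¹ : ℝ≥0∞)^k := by
      rw [hQ, volume_cube]
      have h2hk : 2 * hk = 2^(k+2) * δ := by rw [hhk]; ring
      rw [h2hk]
      have ha : (0:ℝ) < 2^(k+2)*δ := by positivity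
      rw [← ENNReal.rpow_natCast (ENNReal.ofReal ((2:ℝ)^(k+2)*δ)) n, ← ENNReal.rpow_mul]
      have hexp : (n:ℝ) * (2 - α/(n:ℝ)) = 2*(n:ℝ) - α := by
        field_simp
      rw [hexp, ENNReal.ofReal_rpow_of_pos ha]
      rw [hc1, ← ENNReal.ofReal_mul (by positivity)]
      rw [mul_assoc κ (((2:ℝ)^k * δ) ^ e) _]
      rw [he, real_coef n α δ hδ k]
      rw [hc2]
      have hpow : (2⁻¹ : ℝ≥0∞)^k = ENNReal.ofReal (((2:ℝ)⁻¹)^k) := by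
        rw [ENNReal.ofReal_pow (by norm_num)]
        congr 1
        rw [ENNReal.ofReal_inv_of_pos (by norm_num)]
        norm_num
      rw [hpow, ← ENNReal.ofReal_mul (by positivity)]
      congr 1
      ring
    have hstep5 : c1 * ((volume Q) ^ (2 - α/(n:ℝ)) * B) = c2 * (2⁻¹ : ℝ≥0∞)^k * B := by
      rw [← mul_assoc, hcoef]
    calc ∫⁻ p in A k, G p
        ∂((volume : Measure (EuclideanSpace ℝ (Fin n))).prod volume)
        ≤ ∫⁻ p in A k, c1 * (F1 p.1 * F2 p.2)
          ∂((volume : Measure (EuclideanSpace ℝ (Fin n))).prod volume) := hstep1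
      _ ≤ ∫⁻ p in Q ×ˢ Q, c1 * (F1 p.1 * F2 p.2)
          ∂((volume : Measure (EuclideanSpace ℝ (Fin n))).prod volume) := hstep2
      _ = c1 * ((∫⁻ y in Q, ENNReal.ofReal |f y|) * (∫⁻ z in Q, ENNReal.ofReal |g z|)) := hstep3
      _ ≤ c1 * ((volume Q) ^ (2 - α/(n:ℝ)) * B) := hstep4
      _ = c2 * (2⁻¹ : ℝ≥0∞)^k * B := hstep5
  -- sum up
  have hsum : ∑' k, c2 * (2⁻¹ : ℝ≥0∞)^k * B = 2 * c2 * B := by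
    have : ∀ k : ℕ, c2 * (2⁻¹ : ℝ≥0∞)^k * B = (c2 * B) * (2⁻¹ : ℝ≥0∞)^k := by
      intro k; ring
    rw [tsum_congr this, ENNReal.tsum_mul_left, ENNReal.tsum_geometric]
    have h12 : (1 : ℝ≥0∞) - 2⁻¹ = 2⁻¹ := by
      rw [ENNReal.one_sub_inv_two]
    rw [h12, inv_inv]
    ring
  -- final comparison
  have hfinal : 2 * c2 * B ≤ ENNReal.ofReal ((2:ℝ) ^ (4 * n + 2) * C * (‖t‖ / δ) * Mb) * B := by
    apply mul_le_mul_left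
    have h2c2 : 2 * c2 = ENNReal.ofReal (2 * (κ * ((2:ℝ)^(2*(2*(n:ℝ)-α)) * δ⁻¹))) := by
      rw [hc2, ENNReal.ofReal_mul (by norm_num : (0:ℝ) ≤ 2), ENNReal.ofReal_ofNat]
    rw [h2c2]
    apply ENNReal.ofReal_le_ofReal
    have hexp : (2:ℝ)^(2*(2*(n:ℝ)-α)) ≤ (2:ℝ)^(4*n : ℕ) := by
      rw [← Real.rpow_natCast (2:ℝ) (4*n)]
      apply Real.rpow_le_rpow_of_exponent_le (by norm_num)
      push_cast
      nlinarith
    calc 2 * (κ * ((2:ℝ)^(2*(2*(n:ℝ)-α)) * δ⁻¹))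
        ≤ 2 * (κ * ((2:ℝ)^(4*n : ℕ) * δ⁻¹)) := by
          apply mul_le_mul_of_nonneg_left _ (by norm_num)
          apply mul_le_mul_of_nonneg_left _ hκ0
          exact mul_le_mul_of_nonneg_right hexp (by positivity)
      _ = (2:ℝ) ^ (4 * n + 2) * C * (‖t‖ / δ) * Mb := by
          rw [hκ, pow_add]
          field_simp
    -- done
  refine le_trans stepA ?_
  rw [stepC]
  refine le_trans stepF ?_
  refine le_trans (ENNReal.tsum_le_tsum stepG) ?_
  rw [hsum]
  exact hfinal
end

section
/- Let b ∈ C_c^∞(ℝ^n), 0 < α < 2n, 1 < p, q < ∞, α/n < 1/p + 1/q, and 1/r = 1/p + 1/q − α/n with r ≥ 1. Let T_α have kernel satisfying |K_α(x,y,z)| ≤ C(|x−y|+|x−z|)^{α−2n}. Then for every ε > 0 there exists R > 1, depending only on ε, b, n, p, q, α (not on f or g), such that (∫_{|x|>R} |[T_α,b]_1(f,g)(x)|^r dx)^{1/r} ≤ ε ‖f‖_{L^p} ‖g‖_{L^q} for all f ∈ L^p, g ∈ L^q, where [T_α,b]_1(f,g) = T_α(bf,g) − b·T_α(f,g). -/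
open Real MeasureTheory Topology Filter ENNReal

private lemma memLp_of_integrable_rpow {X : Type*} [MeasurableSpace X] {μ : Measure X}
    {h : X → ℝ} (hm : AEStronglyMeasurable h μ) (h0 : ∀ z, 0 ≤ h z) {t : ℝ} (ht : 0 < t)
    (hint : Integrable (fun z => h z ^ t) μ) : MemLp h (ENNReal.ofReal t) μ := by
  have htne : ENNReal.ofReal t ≠ 0 := by simp [ENNReal.ofReal_eq_zero, not_le, ht]
  have htop : ENNReal.ofReal t ≠ ⊤ := ENNReal.ofReal_ne_top
  have key : MemLp (fun z => ‖h z‖ ^ (ENNReal.ofReal t).toReal)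
      ((ENNReal.ofReal t) / (ENNReal.ofReal t)) μ := by
    rw [ENNReal.div_self htne htop, memLp_one_iff_integrable]
    have : (fun z => ‖h z‖ ^ (ENNReal.ofReal t).toReal) = fun z => h z ^ t := by
      funext z; rw [Real.norm_of_nonneg (h0 z), ENNReal.toReal_ofReal ht.le]
    rw [this]; exact hint
  exact (memLp_norm_rpow_iff hm htne htop).1 key

set_option maxHeartbeats 1000000 in
/-- Uniform decay at infinity of the commutator `[T_α,b]_1(f,g)` for
`b ∈ C_c^∞`. -/
theorem commutator_tail_estimate (n : ℕ) (hn : 0 < n) (α p q r : ℝ)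
    (hα : 0 < α) (hα2 : α < 2 * n) (hp : 1 < p) (hq : 1 < q) (hr : 1 ≤ r)
    (hpq : α / n < 1 / p + 1 / q) (hrpq : 1 / r = 1 / p + 1 / q - α / n)
    (C : ℝ) (hC : 0 < C)
    (K : EuclideanSpace ℝ (Fin n) → EuclideanSpace ℝ (Fin n) →
      EuclideanSpace ℝ (Fin n) → ℝ)
    (hK : ∀ x y z, |K x y z| ≤ C * (‖x - y‖ + ‖x - z‖) ^ (α - 2 * n))
    (b : EuclideanSpace ℝ (Fin n) → ℝ)
    (hb : ContDiff ℝ (⊤ : ℕ∞) b) (hbs : HasCompactSupport b)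
    (T : (EuclideanSpace ℝ (Fin n) → ℝ) → (EuclideanSpace ℝ (Fin n) → ℝ) →
      EuclideanSpace ℝ (Fin n) → ℝ)
    (hT : ∀ f g x, T f g x = ∫ y, ∫ z, K x y z * f y * g z) :
    ∀ ε > 0, ∃ R : ℝ, R > 1 ∧
      ∀ (f g : EuclideanSpace ℝ (Fin n) → ℝ),
        MemLp f (ENNReal.ofReal p) → MemLp g (ENNReal.ofReal q) →
        (∫ x in {x : EuclideanSpace ℝ (Fin n) | R < ‖x‖},
            |T (fun y => b y * f y) g x - b x * T f g x| ^ r) ^ (1 / r) ≤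
          ε * (∫ x, |f x| ^ p) ^ (1 / p) * (∫ x, |g x| ^ q) ^ (1 / q) := by
  classical
  intro ε hε
  have hn' : (0:ℝ) < n := by exact_mod_cast hn
  have hp0 : (0:ℝ) < p := lt_trans one_pos hp
  have hq0 : (0:ℝ) < q := lt_trans one_pos hq
  have hr0 : (0:ℝ) < r := lt_of_lt_of_le one_pos hr
  have hqc : (q / (q - 1)).HolderConjugate q := (Real.HolderConjugate.conjExponent hq).symm
  have hpc : (p / (p - 1)).HolderConjugate p := (Real.HolderConjugate.conjExponent hp).symm
  set q' : ℝ := q / (q - 1) with hq'def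
  set p' : ℝ := p / (p - 1) with hp'def
  clear_value q' p'
  have hq'0 : 0 < q' := hqc.pos
  -- exponent arithmetic
  set γ : ℝ := n + n / q - α with hγdef
  clear_value γ
  have h1p : 1 / p < 1 := by rw [div_lt_one hp0]; exact hp
  have hαn : α / n = 1 / p + 1 / q - 1 / r := by linarith
  have hα_eq : α = n / p + n / q - n / r := by
    have h := congrArg (fun t : ℝ => (n : ℝ) * t) hαn
    simp only [mul_sub, mul_add] at h
    rw [mul_div_assoc', mul_comm (n:ℝ) α, mul_div_assoc, div_self hn'.ne', mul_one] at h
    rw [h]; ring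
  have hγ_eq : γ = n - n / p + n / r := by rw [hγdef, hα_eq]; ring
  have hγr : (n : ℝ) < γ * r := by
    have h2 : (n:ℝ) / r * r = n := div_mul_cancel₀ _ hr0.ne'
    have h3 : (n:ℝ) / p < n := by
      rw [div_lt_iff₀ hp0]; nlinarith
    have h4 : (n:ℝ) - n / p > 0 := by linarith
    calc (n:ℝ) = n / r * r := h2.symm
      _ < (n - n / p + n / r) * r := by
          apply mul_lt_mul_of_pos_right _ hr0
          linarith
      _ = γ * r := by rw [hγ_eq]
  set θ : ℝ := ((n : ℝ) / r + γ) / 2 with hθdef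
  clear_value θ
  have hγpos : 0 < γ := by
    have : (n:ℝ)/r > 0 := div_pos hn' hr0
    nlinarith
  have hθpos : 0 < θ := by
    have : (0:ℝ) < (n:ℝ)/r := div_pos hn' hr0
    rw [hθdef]; positivity
  have hθγ : θ < γ := by
    have : (n:ℝ)/r < γ := by
      rw [div_lt_iff₀ hr0]; linarith
    rw [hθdef]; linarith
  have hθr : (n : ℝ) < θ * r := by
    have h2 : θ * r = ((n:ℝ) + γ * r) / 2 := by
      rw [hθdef]; field_simp
    rw [h2]; linarith
  set v : ℝ := 2 * n - α - θ with hvdef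
  clear_value v
  have hkeyγ : (2 * n - α - γ) * q' = n := by
    have hq1ne : q - 1 ≠ 0 := by
      have : (0:ℝ) < q - 1 := by linarith
      exact this.ne'
    rw [hγdef, hq'def]
    field_simp
    ring
  have hvq : (n : ℝ) < v * q' := by
    have h2 : v * q' = (2 * n - α - γ) * q' + (γ - θ) * q' := by rw [hvdef]; ring
    have h3 : 0 < (γ - θ) * q' := mul_pos (by linarith) hq'0
    rw [h2, hkeyγ]; linarith
  have hv0 : 0 < v := by
    by_contra h
    push_neg at h
    have : v * q' ≤ 0 := mul_nonpos_of_nonpos_of_nonneg h hq'0.le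
    linarith
  have hsum : α - 2 * n = -θ + -v := by rw [hvdef]; ring
  -- support of b
  obtain ⟨M0, hM0⟩ := hbs.isBounded.subset_closedBall 0
  set M : ℝ := max M0 1 with hMdef
  clear_value M
  have hM1 : 1 ≤ M := by rw [hMdef]; exact le_max_right _ _
  have hsupp : tsupport b ⊆ Metric.closedBall 0 M := by
    refine hM0.trans (Metric.closedBall_subset_closedBall ?_)
    rw [hMdef]; exact le_max_left _ _
  -- constants
  have hbmemp' : MemLp (fun y => |b y|) (ENNReal.ofReal p') volume := by
    simpa [Real.norm_eq_abs] using
      (hb.continuous.memLp_of_hasCompactSupport hbs :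
        MemLp b (ENNReal.ofReal p') volume).norm
  set Jb : ℝ := (∫ y : EuclideanSpace ℝ (Fin n), |b y| ^ p') ^ (1 / p') with hJbdef
  clear_value Jb
  have hJb0 : 0 ≤ Jb := by
    rw [hJbdef]
    exact Real.rpow_nonneg (integral_nonneg fun y => Real.rpow_nonneg (abs_nonneg _) _) _
  have hI₀int : Integrable (fun w : EuclideanSpace ℝ (Fin n) => (1 + ‖w‖) ^ (-(v * q'))) := by
    apply integrable_one_add_norm
    rw [finrank_euclideanSpace_fin]
    exact hvq
  set I₀ : ℝ := ∫ w : EuclideanSpace ℝ (Fin n), (1 + ‖w‖) ^ (-(v * q')) with hI₀def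
  clear_value I₀
  have hI₀0 : 0 ≤ I₀ := by
    rw [hI₀def]
    exact integral_nonneg fun w => Real.rpow_nonneg (by positivity) _
  set K₂ : ℝ := C * I₀ ^ (1 / q') * Jb with hK₂def
  clear_value K₂
  have hK₂0 : 0 ≤ K₂ := by
    rw [hK₂def]
    exact mul_nonneg (mul_nonneg hC.le (Real.rpow_nonneg hI₀0 _)) hJb0
  -- tail majorant
  set H : EuclideanSpace ℝ (Fin n) → ℝ := fun x => (4 : ℝ) ^ (θ * r) * (1 + ‖x‖) ^ (-(θ * r)) with hHdef
  have hH0 : ∀ x, 0 ≤ H x := fun x => by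
    apply mul_nonneg (Real.rpow_nonneg (by norm_num) _) (Real.rpow_nonneg (by positivity) _)
  have hHcont : Continuous H := by
    apply continuous_const.mul
    exact (continuous_const.add continuous_norm).rpow_const fun x => Or.inl (by simp only [Pi.add_apply]; positivity)
  have hHint : Integrable H := by
    apply Integrable.const_mul
    apply integrable_one_add_norm
    rw [finrank_euclideanSpace_fin]
    exact hθr
  have hmeasR : ∀ R : ℝ, MeasurableSet {x : EuclideanSpace ℝ (Fin n) | R < ‖x‖} := fun R =>
    (isOpen_lt continuous_const continuous_norm).measurableSet
  -- the tail integral tends to zero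
  have htail : Filter.Tendsto (fun R : ℝ => ∫ x in {x : EuclideanSpace ℝ (Fin n) | R < ‖x‖}, H x)
      Filter.atTop (𝓝 0) := by
    have heq : (fun R : ℝ => ∫ x in {x : EuclideanSpace ℝ (Fin n) | R < ‖x‖}, H x)
        = fun R : ℝ => ∫ x : EuclideanSpace ℝ (Fin n), Set.indicator {x : EuclideanSpace ℝ (Fin n) | R < ‖x‖} H x := by
      funext R; rw [integral_indicator (hmeasR R)]
    rw [heq]
    have h0 : (0 : ℝ) = ∫ _x : EuclideanSpace ℝ (Fin n), (0:ℝ) := by simp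
    rw [h0]
    apply tendsto_integral_filter_of_dominated_convergence H
    · exact Filter.Eventually.of_forall fun R =>
        (hHcont.aestronglyMeasurable).indicator (hmeasR R)
    · refine Filter.Eventually.of_forall fun R => Filter.Eventually.of_forall fun x => ?_
      by_cases hx : x ∈ {x : EuclideanSpace ℝ (Fin n) | R < ‖x‖}
      · rw [Set.indicator_of_mem hx, Real.norm_of_nonneg (hH0 x)]
      · rw [Set.indicator_of_notMem hx]; simpa using hH0 x
    · exact hHint
    · refine Filter.Eventually.of_forall fun x => ?_
      apply Filter.Tendsto.congr' _ tendsto_const_nhds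
      filter_upwards [Filter.eventually_gt_atTop ‖x‖] with R hR
      rw [Set.indicator_of_notMem]
      simpa using hR.le
  have h2 : Filter.Tendsto
      (fun R : ℝ => K₂ * (∫ x in {x : EuclideanSpace ℝ (Fin n) | R < ‖x‖}, H x) ^ (1 / r))
      Filter.atTop (𝓝 0) := by
    have h1r : (0:ℝ) < 1 / r := by positivity
    have := (htail.rpow_const (Or.inr h1r.le)).const_mul K₂
    simpa [one_div, Real.zero_rpow (inv_ne_zero hr0.ne')] using this
  obtain ⟨R, hRgt, hRineq⟩ :
      ∃ R : ℝ, R > max 1 (2 * M + 2) ∧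
        K₂ * (∫ x in {x : EuclideanSpace ℝ (Fin n) | R < ‖x‖}, H x) ^ (1 / r) < ε := by
    have := (Filter.eventually_gt_atTop (max 1 (2 * M + 2))).and
      (h2.eventually_lt_const hε)
    obtain ⟨R, hR1, hR2⟩ := this.exists
    exact ⟨R, hR1, hR2⟩
  have hR1 : (1:ℝ) < R := lt_of_le_of_lt (le_max_left _ _) hRgt
  have hRM : 2 * M + 2 < R := lt_of_le_of_lt (le_max_right _ _) hRgt
  refine ⟨R, hR1, fun f g hf hg => ?_⟩
  -- notation
  set Nf : ℝ := (∫ x : EuclideanSpace ℝ (Fin n), |f x| ^ p) ^ (1 / p) with hNfdef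
  set Ng : ℝ := (∫ x : EuclideanSpace ℝ (Fin n), |g x| ^ q) ^ (1 / q) with hNgdef
  clear_value Nf Ng
  have hNf0 : 0 ≤ Nf := by
    rw [hNfdef]
    exact Real.rpow_nonneg (integral_nonneg fun x => Real.rpow_nonneg (abs_nonneg _) _) _
  have hNg0 : 0 ≤ Ng := by
    rw [hNgdef]
    exact Real.rpow_nonneg (integral_nonneg fun x => Real.rpow_nonneg (abs_nonneg _) _) _
  set S : Set (EuclideanSpace ℝ (Fin n)) := {x : EuclideanSpace ℝ (Fin n) | R < ‖x‖} with hSdef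
  have hSmeas : MeasurableSet S := hmeasR R
  have hfabs : MemLp (fun y => |f y|) (ENNReal.ofReal p) volume := by
    simpa [Real.norm_eq_abs] using hf.norm
  have hgabs : MemLp (fun z => |g z|) (ENNReal.ofReal q) volume := by
    simpa [Real.norm_eq_abs] using hg.norm
  -- integrability of |b| * |f|
  have hbfint : Integrable (fun y => |b y| * |f y|) volume := by
    have hexp : (1 : ℝ≥0∞) / 1 = 1 / ENNReal.ofReal p' + 1 / ENNReal.ofReal p := by
      simp only [one_div, inv_one]
      exact hpc.inv_add_inv_ennreal.symm
    have := hfabs.smul hbmemp' (r := 1) (hpqr := ⟨by simpa [one_div] using hexp.symm⟩)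
    rw [memLp_one_iff_integrable] at this
    exact this
  have holder_bf : ∫ y : EuclideanSpace ℝ (Fin n), |b y| * |f y| ≤ Jb * Nf := by
    rw [hJbdef, hNfdef]
    exact integral_mul_le_Lp_mul_Lq_of_nonneg hpc
      (Filter.Eventually.of_forall fun y => abs_nonneg _)
      (Filter.Eventually.of_forall fun y => abs_nonneg _) hbmemp' hfabs
  -- pointwise estimate on the tail
  have claim : ∀ x ∈ S,
      |T (fun y => b y * f y) g x - b x * T f g x| ≤ K₂ * Nf * Ng * (‖x‖ / 2) ^ (-θ) := by
    intro x hx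
    have hxR : R < ‖x‖ := hx
    have hxM : 2 * M + 2 < ‖x‖ := lt_trans hRM hxR
    have hxhalf : M + 1 ≤ ‖x‖ / 2 := by linarith
    have hxhalf0 : 0 < ‖x‖ / 2 := by linarith
    have hbx : b x = 0 := by
      apply image_eq_zero_of_notMem_tsupport
      intro hmem
      have := hsupp hmem
      rw [Metric.mem_closedBall, dist_zero_right] at this
      linarith
    rw [hT, hbx, zero_mul, sub_zero]
    -- the auxiliary kernel profile
    set ψ : EuclideanSpace ℝ (Fin n) → ℝ := fun z => (1 + ‖x - z‖) ^ (-v) with hψdef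
    have hψ0 : ∀ z, 0 ≤ ψ z := fun z => Real.rpow_nonneg (by positivity) _
    have hψcont : Continuous ψ := by
      apply (continuous_const.add (continuous_const.sub continuous_id).norm).rpow_const
      intro z; left; simp only [Pi.add_apply]; positivity
    have hψpow : (fun z => ψ z ^ q') = fun z => (1 + ‖x - z‖) ^ (-(v * q')) := by
      funext z
      rw [hψdef]
      rw [← Real.rpow_mul (by positivity : (0:ℝ) ≤ 1 + ‖x - z‖)]
      ring_nf
    have hψpow_int : Integrable (fun z => ψ z ^ q') volume := by
      rw [hψpow]
      simpa using hI₀int.comp_sub_left x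
    have hψmem : MemLp ψ (ENNReal.ofReal q') volume :=
      memLp_of_integrable_rpow hψcont.aestronglyMeasurable hψ0 hq'0 hψpow_int
    have hψint_eq : ∫ z, ψ z ^ q' = I₀ := by
      rw [hψpow, hI₀def]
      simpa using integral_sub_left_eq_self (fun w : EuclideanSpace ℝ (Fin n) => (1 + ‖w‖) ^ (-(v * q'))) volume x
    -- Hölder in z
    have hprod : Integrable (fun z => ψ z * |g z|) volume := by
      have hexp : (1 : ℝ≥0∞) / 1 = 1 / ENNReal.ofReal q' + 1 / ENNReal.ofReal q := by
        simp only [one_div, inv_one]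
        exact hqc.inv_add_inv_ennreal.symm
      have := hgabs.smul hψmem (r := 1) (hpqr := ⟨by simpa [one_div] using hexp.symm⟩)
      rw [memLp_one_iff_integrable] at this
      exact this
    have holder_z : ∫ z, ψ z * |g z| ≤ I₀ ^ (1 / q') * Ng := by
      rw [hNgdef]
      have := integral_mul_le_Lp_mul_Lq_of_nonneg hqc
        (Filter.Eventually.of_forall fun z => hψ0 z)
        (Filter.Eventually.of_forall fun z => abs_nonneg _) hψmem hgabs
      rwa [hψint_eq] at this
    have hΦ0 : 0 ≤ ∫ z, ψ z * |g z| :=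
      integral_nonneg fun z => mul_nonneg (hψ0 z) (abs_nonneg _)
    -- inner bound
    set A : ℝ := C * (‖x‖ / 2) ^ (-θ) * (I₀ ^ (1 / q') * Ng) with hAdef
    clear_value A
    have hA0 : 0 ≤ A := by
      rw [hAdef]
      apply mul_nonneg (mul_nonneg hC.le (Real.rpow_nonneg hxhalf0.le _))
      exact mul_nonneg (Real.rpow_nonneg hI₀0 _) hNg0
    have inner : ∀ y : EuclideanSpace ℝ (Fin n),
        |∫ z, K x y z * (b y * f y) * g z| ≤ A * (|b y| * |f y|) := by
      intro y
      by_cases hby : b y = 0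
      · simp [hby]
      · have hy : ‖y‖ ≤ M := by
          have hmem : y ∈ tsupport b := subset_tsupport b (by simpa using hby)
          have := hsupp hmem
          rwa [Metric.mem_closedBall, dist_zero_right] at this
        have hd2 : ‖x‖ / 2 ≤ ‖x - y‖ := by
          have h1 : ‖x‖ - ‖y‖ ≤ ‖x - y‖ := norm_sub_norm_le x y
          linarith
        have hd1 : 1 ≤ ‖x - y‖ := le_trans (by linarith) hd2
        have hd0 : 0 < ‖x - y‖ := lt_of_lt_of_le one_pos hd1
        -- rewrite the integral
        have hre : (fun z => K x y z * (b y * f y) * g z)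
            = fun z => (b y * f y) * (K x y z * g z) := by
          funext z; ring
        rw [hre, integral_const_mul, abs_mul]
        -- bound the z-integral
        have hKz : ∀ z : EuclideanSpace ℝ (Fin n), |K x y z * g z|
            ≤ (C * ‖x - y‖ ^ (-θ)) * (ψ z * |g z|) := by
          intro z
          rw [abs_mul]
          have hker : |K x y z| ≤ C * ‖x - y‖ ^ (-θ) * ψ z := by
            refine le_trans (hK x y z) ?_
            have hpos : (0:ℝ) < ‖x - y‖ + ‖x - z‖ := by positivity
            have hsplit : (‖x - y‖ + ‖x - z‖) ^ (α - 2 * n)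
                = (‖x - y‖ + ‖x - z‖) ^ (-θ) * (‖x - y‖ + ‖x - z‖) ^ (-v) := by
              rw [← Real.rpow_add hpos, ← hsum]
            rw [hsplit, ← mul_assoc]
            apply mul_le_mul _ _ (Real.rpow_nonneg hpos.le _)
              (by positivity)
            · apply mul_le_mul_of_nonneg_left _ hC.le
              exact Real.rpow_le_rpow_of_nonpos hd0
                (le_add_of_nonneg_right (norm_nonneg _)) (by linarith)
            · apply Real.rpow_le_rpow_of_nonpos (by positivity) (by linarith)
              linarith
          calc |K x y z| * |g z| ≤ (C * ‖x - y‖ ^ (-θ) * ψ z) * |g z| :=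
                mul_le_mul_of_nonneg_right hker (abs_nonneg _)
            _ = (C * ‖x - y‖ ^ (-θ)) * (ψ z * |g z|) := by ring
        have hzint : |∫ z, K x y z * g z|
            ≤ (C * ‖x - y‖ ^ (-θ)) * (I₀ ^ (1 / q') * Ng) := by
          calc |∫ z, K x y z * g z| ≤ ∫ z, |K x y z * g z| :=
                norm_integral_le_integral_norm (fun z => K x y z * g z)
            _ ≤ ∫ z, (C * ‖x - y‖ ^ (-θ)) * (ψ z * |g z|) := by
                apply integral_mono_of_nonneg
                  (Filter.Eventually.of_forall fun z => abs_nonneg _)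
                  (hprod.const_mul _)
                  (Filter.Eventually.of_forall hKz)
            _ = (C * ‖x - y‖ ^ (-θ)) * ∫ z, ψ z * |g z| := integral_const_mul _ _
            _ ≤ (C * ‖x - y‖ ^ (-θ)) * (I₀ ^ (1 / q') * Ng) := by
                apply mul_le_mul_of_nonneg_left holder_z
                exact mul_nonneg hC.le (Real.rpow_nonneg (norm_nonneg _) _)
        have hxy : ‖x - y‖ ^ (-θ) ≤ (‖x‖ / 2) ^ (-θ) :=
          Real.rpow_le_rpow_of_nonpos hxhalf0 hd2 (by linarith)
        calc |b y * f y| * |∫ z, K x y z * g z|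
            ≤ |b y * f y| * ((C * ‖x - y‖ ^ (-θ)) * (I₀ ^ (1 / q') * Ng)) :=
              mul_le_mul_of_nonneg_left hzint (abs_nonneg _)
          _ ≤ |b y * f y| * ((C * (‖x‖ / 2) ^ (-θ)) * (I₀ ^ (1 / q') * Ng)) := by
              apply mul_le_mul_of_nonneg_left _ (abs_nonneg _)
              apply mul_le_mul_of_nonneg_right _
                (mul_nonneg (Real.rpow_nonneg hI₀0 _) hNg0)
              exact mul_le_mul_of_nonneg_left hxy hC.le
          _ = A * (|b y| * |f y|) := by rw [hAdef, abs_mul]; ring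
    -- outer integral
    calc |∫ y, ∫ z, K x y z * (b y * f y) * g z|
        ≤ ∫ y, |∫ z, K x y z * (b y * f y) * g z| :=
          norm_integral_le_integral_norm (fun y => ∫ z, K x y z * (b y * f y) * g z)
      _ ≤ ∫ y, A * (|b y| * |f y|) := by
          apply integral_mono_of_nonneg
            (Filter.Eventually.of_forall fun y => abs_nonneg _)
            (hbfint.const_mul _)
            (Filter.Eventually.of_forall inner)
      _ = A * ∫ y, |b y| * |f y| := integral_const_mul _ _
      _ ≤ A * (Jb * Nf) := mul_le_mul_of_nonneg_left holder_bf hA0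
      _ = K₂ * Nf * Ng * (‖x‖ / 2) ^ (-θ) := by rw [hAdef, hK₂def]; ring
  -- conclude: integrate the pointwise bound
  set D : ℝ := K₂ * Nf * Ng with hDdef
  clear_value D
  have hD0 : 0 ≤ D := by
    rw [hDdef]; exact mul_nonneg (mul_nonneg hK₂0 hNf0) hNg0
  have hbound_S : ∀ x ∈ S,
      |T (fun y => b y * f y) g x - b x * T f g x| ^ r ≤ D ^ r * H x := by
    intro x hx
    have hxR : R < ‖x‖ := hx
    have hx1 : 1 < ‖x‖ := lt_trans hR1 hxR
    have h1 : |T (fun y => b y * f y) g x - b x * T f g x| ^ r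
        ≤ (D * (‖x‖ / 2) ^ (-θ)) ^ r :=
      Real.rpow_le_rpow (abs_nonneg _) (claim x hx) hr0.le
    have h2 : (D * (‖x‖ / 2) ^ (-θ)) ^ r = D ^ r * ((‖x‖ / 2) ^ (-θ)) ^ r :=
      Real.mul_rpow hD0 (Real.rpow_nonneg (by positivity) _)
    have h3 : ((‖x‖ / 2) ^ (-θ)) ^ r = (‖x‖ / 2) ^ (-(θ * r)) := by
      rw [← Real.rpow_mul (by positivity : (0:ℝ) ≤ ‖x‖ / 2)]
      ring_nf
    have h4 : (‖x‖ / 2) ^ (-(θ * r)) ≤ H x := by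
      have h14 : (1 + ‖x‖) / 4 ≤ ‖x‖ / 2 := by linarith
      have h5 : (‖x‖ / 2) ^ (-(θ * r)) ≤ ((1 + ‖x‖) / 4) ^ (-(θ * r)) :=
        Real.rpow_le_rpow_of_nonpos (by positivity) h14
          (neg_nonpos.mpr (by positivity))
      have h6 : ((1 + ‖x‖) / 4) ^ (-(θ * r))
          = (4:ℝ) ^ (θ * r) * (1 + ‖x‖) ^ (-(θ * r)) := by
        rw [Real.div_rpow (by positivity) (by norm_num)]
        rw [Real.rpow_neg (by norm_num : (0:ℝ) ≤ 4), div_eq_mul_inv, inv_inv]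
        ring
      rw [hHdef]
      calc (‖x‖ / 2) ^ (-(θ * r)) ≤ ((1 + ‖x‖) / 4) ^ (-(θ * r)) := h5
        _ = (4:ℝ) ^ (θ * r) * (1 + ‖x‖) ^ (-(θ * r)) := h6
    calc |T (fun y => b y * f y) g x - b x * T f g x| ^ r
        ≤ (D * (‖x‖ / 2) ^ (-θ)) ^ r := h1
      _ = D ^ r * ((‖x‖ / 2) ^ (-θ)) ^ r := h2
      _ = D ^ r * (‖x‖ / 2) ^ (-(θ * r)) := by rw [h3]
      _ ≤ D ^ r * H x := mul_le_mul_of_nonneg_left h4 (Real.rpow_nonneg hD0 _)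
  have hHSint : IntegrableOn (fun x => D ^ r * H x) S volume :=
    (hHint.const_mul _).integrableOn
  have step1 : ∫ x in S, |T (fun y => b y * f y) g x - b x * T f g x| ^ r
      ≤ D ^ r * ∫ x in S, H x := by
    have h1 : ∫ x in S, |T (fun y => b y * f y) g x - b x * T f g x| ^ r
        ≤ ∫ x in S, D ^ r * H x := by
      apply integral_mono_of_nonneg
        (Filter.Eventually.of_forall fun x => Real.rpow_nonneg (abs_nonneg _) _)
        hHSint
      rw [Filter.EventuallyLE, ae_restrict_iff' hSmeas]
      exact Filter.Eventually.of_forall hbound_S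
    rwa [integral_const_mul] at h1
  set τ : ℝ := ∫ x in S, H x with hτdef
  have hτ0 : 0 ≤ τ := integral_nonneg fun x => hH0 x
  have step2 : (∫ x in S, |T (fun y => b y * f y) g x - b x * T f g x| ^ r) ^ (1 / r)
      ≤ (D ^ r * τ) ^ (1 / r) := by
    apply Real.rpow_le_rpow _ step1 (by positivity)
    exact integral_nonneg fun x => Real.rpow_nonneg (abs_nonneg _) _
  have step3 : (D ^ r * τ) ^ (1 / r) = D * τ ^ (1 / r) := by
    rw [Real.mul_rpow (Real.rpow_nonneg hD0 _) hτ0]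
    congr 1
    rw [← Real.rpow_mul hD0, mul_one_div_cancel hr0.ne', Real.rpow_one]
  have step4 : D * τ ^ (1 / r) ≤ ε * Nf * Ng := by
    have h1 : D * τ ^ (1 / r) = (K₂ * τ ^ (1 / r)) * Nf * Ng := by
      rw [hDdef]; ring
    rw [h1]
    have h2 : K₂ * τ ^ (1 / r) ≤ ε := le_of_lt hRineq
    apply mul_le_mul_of_nonneg_right _ hNg0
    exact mul_le_mul_of_nonneg_right h2 hNf0
  exact le_trans step2 (le_trans (le_of_eq step3) step4)
end

section
/- Let b ∈ C_c^∞(ℝ^n), 0 < α < n, 1 < p, q, r < ∞ with 1/p + 1/q < 1 and 1/r = 1/p + 1/q − α/n. Then for every ε > 0 there exists R = R(ε) > 0 (independent of f) such that for all f with ‖f‖_{L^p} ≤ 1 and fixed g ∈ L^q, ∫_{|x|>R} |[BI_α,b]_1(f,g)(x)|^r dx < ε^r. Key ingredients: for |x| ≥ R with R > 2·max{|x'| : x' ∈ supp b}, the pointwise bound |[BI_α,b]_1(f,g)(x)| ≤ C ‖b‖_∞ |x|^{α−n} |supp b|^{1/s'} ‖f‖_{L^p} ‖g‖_{L^q} holds,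 and r(n−α) > n ensures integrability of |x|^{r(α−n)} at infinity. -/
open Real MeasureTheory
open scoped ENNReal

private lemma ofReal_one_div_split {a c d : ℝ} (ha : 0 < a) (hc : 0 < c) (hd : 0 < d)
    (h : 1 / a = 1 / c + 1 / d) :
    1 / ENNReal.ofReal a = 1 / ENNReal.ofReal c + 1 / ENNReal.ofReal d := by
  rw [one_div, one_div, one_div, ← ENNReal.ofReal_inv_of_pos ha,
    ← ENNReal.ofReal_inv_of_pos hc, ← ENNReal.ofReal_inv_of_pos hd,
    ← ENNReal.ofReal_add (by positivity) (by positivity)]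
  congr 1
  rw [one_div, one_div, one_div] at h
  linarith

set_option maxHeartbeats 1000000 in
/-- Uniform decay at infinity of the commutator `[BI_α,b]_1(f,g)` over the unit
ball of `L^p`, for fixed `g ∈ L^q` and `b ∈ C_c^∞`. -/
theorem BI_commutator_tail_estimate (n : ℕ) (hn : 0 < n) (α p q r : ℝ)
    (hα : 0 < α) (hαn : α < n) (hp : 1 < p) (hq : 1 < q) (hr : 1 < r)
    (hpq : 1 / p + 1 / q < 1) (hrpq : 1 / r = 1 / p + 1 / q - α / n)
    (b : EuclideanSpace ℝ (Fin n) → ℝ)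
    (hb : ContDiff ℝ (⊤ : ℕ∞) b) (hbs : HasCompactSupport b)
    (g : EuclideanSpace ℝ (Fin n) → ℝ) (hg : MemLp g (ENNReal.ofReal q)) :
    ∀ ε > 0, ∃ R : ℝ, R > 0 ∧
      ∀ f : EuclideanSpace ℝ (Fin n) → ℝ,
        MemLp f (ENNReal.ofReal p) → (∫ x, |f x| ^ p) ^ (1 / p) ≤ 1 →
        (∫ x in {x : EuclideanSpace ℝ (Fin n) | R < ‖x‖},
            |∫ y, (b y - b x) * ‖x - y‖ ^ (α - n) * f y * g ((2 : ℝ) • x - y)| ^ r)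
          < ε ^ r := by
  intro ε hε
  have hn' : (0:ℝ) < n := by exact_mod_cast hn
  have hp0 : (0:ℝ) < p := lt_trans one_pos hp
  have hq0 : (0:ℝ) < q := lt_trans one_pos hq
  have hr0 : (0:ℝ) < r := lt_trans one_pos hr
  -- conjugate exponent of `p`
  have hpcp : p.HolderConjugate (Real.conjExponent p) := Real.HolderConjugate.conjExponent hp
  set cp : ℝ := Real.conjExponent p with hcp_def
  have hcp0 : 0 < cp := hpcp.symm.pos
  -- the auxiliary exponent `t` with `1/t = 1 - 1/p - 1/q`
  have htpos0 : 0 < 1 - 1/p - 1/q := by linarith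
  set t : ℝ := (1 - 1/p - 1/q)⁻¹ with ht_def
  have ht0 : 0 < t := by positivity
  have h_t : 1 / t = 1 - 1/p - 1/q := by rw [one_div, ht_def, inv_inv]
  have hpcp' : 1/p + 1/cp = 1 := by
    have := hpcp.inv_add_inv_eq_one
    rw [one_div, one_div]; linarith
  have h_cp : 1 / cp = 1/t + 1/q := by rw [h_t]; linarith
  have hsplit1 : 1/(1:ℝ≥0∞) = 1/ENNReal.ofReal p + 1/ENNReal.ofReal cp := by
    have h := ofReal_one_div_split one_pos hp0 hcp0 (by rw [div_one]; linarith)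
    simpa using h
  have hsplit2 : 1/ENNReal.ofReal cp = 1/ENNReal.ofReal t + 1/ENNReal.ofReal q :=
    ofReal_one_div_split hcp0 ht0 hq0 h_cp
  -- bound and support of `b`
  obtain ⟨Cb, hCb⟩ := hbs.exists_bound_of_continuous hb.continuous
  have hCb0 : 0 ≤ Cb := le_trans (norm_nonneg _) (hCb 0)
  obtain ⟨M₀, hM₀⟩ := hbs.isBounded.subset_closedBall 0
  set M : ℝ := max M₀ 1 with hM_def
  have hM1 : 1 ≤ M := le_max_right _ _
  have hM0 : 0 < M := lt_of_lt_of_le one_pos hM1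
  have hsupp : tsupport b ⊆ Metric.closedBall 0 M :=
    hM₀.trans (Metric.closedBall_subset_closedBall (le_max_left _ _))
  set B : Set (EuclideanSpace ℝ (Fin n)) := Metric.closedBall 0 M with hB_def
  have hBmeas : MeasurableSet B := measurableSet_closedBall
  have hBvol : volume B ≠ ⊤ := measure_closedBall_lt_top.ne
  set indB : EuclideanSpace ℝ (Fin n) → ℝ := B.indicator (fun _ => (1:ℝ)) with hind_def
  have hindMem : MemLp indB (ENNReal.ofReal t) volume :=
    memLp_indicator_const _ hBmeas 1 (Or.inr hBvol)
  -- the uniform constant `C₀`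
  set C₀ : ℝ := (eLpNorm indB (ENNReal.ofReal t) volume
      * eLpNorm g (ENNReal.ofReal q) volume).toReal with hC₀_def
  have hC₀0 : 0 ≤ C₀ := ENNReal.toReal_nonneg
  -- `Memℒp` of the localized translated `g`
  have hGmem : ∀ x : EuclideanSpace ℝ (Fin n),
      MemLp (fun y => indB y * |g ((2:ℝ) • x - y)|) (ENNReal.ofReal cp) volume := by
    intro x
    have hσ : MeasurePreserving (fun y : EuclideanSpace ℝ (Fin n) => (2:ℝ) • x - y)
        volume volume := Measure.measurePreserving_sub_left volume ((2:ℝ) • x)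
    have hgx : MemLp (fun y => g ((2:ℝ) • x - y)) (ENNReal.ofReal q) volume :=
      hg.comp_measurePreserving hσ
    have hgx' : MemLp (fun y => |g ((2:ℝ) • x - y)|) (ENNReal.ofReal q) volume := by
      simpa [Real.norm_eq_abs] using hgx.norm
    have := hgx'.smul hindMem (hpqr := ⟨by simpa only [one_div] using hsplit2.symm⟩)
    simpa [Pi.smul_apply, smul_eq_mul, Pi.mul_def] using this
  have hGnorm : ∀ x : EuclideanSpace ℝ (Fin n),
      eLpNorm (fun y => indB y * |g ((2:ℝ) • x - y)|) (ENNReal.ofReal cp) volume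
        ≤ eLpNorm indB (ENNReal.ofReal t) volume * eLpNorm g (ENNReal.ofReal q) volume := by
    intro x
    have hσ : MeasurePreserving (fun y : EuclideanSpace ℝ (Fin n) => (2:ℝ) • x - y)
        volume volume := Measure.measurePreserving_sub_left volume ((2:ℝ) • x)
    have hgx : MemLp (fun y => g ((2:ℝ) • x - y)) (ENNReal.ofReal q) volume :=
      hg.comp_measurePreserving hσ
    have hgx' : MemLp (fun y => |g ((2:ℝ) • x - y)|) (ENNReal.ofReal q) volume := by
      simpa [Real.norm_eq_abs] using hgx.norm
    have h2 := eLpNorm_smul_le_mul_eLpNorm hgx'.1 hindMem.1 (hpqr := ⟨by simpa only [one_div] using hsplit2.symm⟩)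
    have h3 : eLpNorm (fun y => |g ((2:ℝ) • x - y)|) (ENNReal.ofReal q) volume
        = eLpNorm g (ENNReal.ofReal q) volume := by
      have := eLpNorm_comp_measurePreserving (g := fun z => |g z|)
        (p := ENNReal.ofReal q) (by simpa [Real.norm_eq_abs] using hg.1.norm) hσ
      rw [show (fun z => |g z|) ∘ (fun y : EuclideanSpace ℝ (Fin n) => (2:ℝ) • x - y)
        = fun y => |g ((2:ℝ) • x - y)| from rfl] at this
      rw [this]
      simpa [Real.norm_eq_abs] using eLpNorm_norm (p := ENNReal.ofReal q)
        (μ := (volume : Measure (EuclideanSpace ℝ (Fin n)))) g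
    calc eLpNorm (fun y => indB y * |g ((2:ℝ) • x - y)|) (ENNReal.ofReal cp) volume
        = eLpNorm (indB • fun y => |g ((2:ℝ) • x - y)|) (ENNReal.ofReal cp) volume := by
          congr 1
      _ ≤ eLpNorm indB (ENNReal.ofReal t) volume
            * eLpNorm (fun y => |g ((2:ℝ) • x - y)|) (ENNReal.ofReal q) volume := h2
      _ = eLpNorm indB (ENNReal.ofReal t) volume * eLpNorm g (ENNReal.ofReal q) volume := by
          rw [h3]
  -- the key uniform bound on the inner convolution-type integral
  have key : ∀ x : EuclideanSpace ℝ (Fin n), ∀ f : EuclideanSpace ℝ (Fin n) → ℝ,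
      MemLp f (ENNReal.ofReal p) → (∫ y, |f y| ^ p) ^ (1 / p) ≤ 1 →
      ∫ y, |f y| * (indB y * |g ((2:ℝ) • x - y)|) ≤ C₀ := by
    intro x f hf hf1
    have hfa : MemLp (fun y => |f y|) (ENNReal.ofReal p) volume := by
      simpa [Real.norm_eq_abs] using hf.norm
    have hGx := hGmem x
    have holder := integral_mul_le_Lp_mul_Lq_of_nonneg hpcp
      (Filter.Eventually.of_forall fun y => abs_nonneg (f y))
      (Filter.Eventually.of_forall fun y =>
        mul_nonneg (Set.indicator_nonneg (fun _ _ => zero_le_one) y) (abs_nonneg _))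
      hfa hGx
    have hcp_e0 : (ENNReal.ofReal cp) ≠ 0 := by
      simp [ENNReal.ofReal_eq_zero, not_le, hcp0]
    have h4 := hGx.eLpNorm_eq_integral_rpow_norm hcp_e0 ENNReal.ofReal_ne_top
    have htr : (ENNReal.ofReal cp).toReal = cp := ENNReal.toReal_ofReal hcp0.le
    have hGint_eq : (∫ y, (indB y * |g ((2:ℝ) • x - y)|) ^ cp) ^ (1/cp)
        = (eLpNorm (fun y => indB y * |g ((2:ℝ) • x - y)|) (ENNReal.ofReal cp) volume).toReal := by
      have hnn : ∀ a : EuclideanSpace ℝ (Fin n),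
          ‖indB a * |g ((2:ℝ) • x - a)|‖ = indB a * |g ((2:ℝ) • x - a)| := fun a =>
        Real.norm_of_nonneg
          (mul_nonneg (Set.indicator_nonneg (fun _ _ => zero_le_one) a) (abs_nonneg _))
      simp only [hnn, htr] at h4
      rw [h4, ENNReal.toReal_ofReal (Real.rpow_nonneg (integral_nonneg fun a =>
        Real.rpow_nonneg (mul_nonneg (Set.indicator_nonneg (fun _ _ => zero_le_one) a)
          (abs_nonneg _)) _) _), one_div]
    have hfin : eLpNorm indB (ENNReal.ofReal t) volume
        * eLpNorm g (ENNReal.ofReal q) volume ≠ ⊤ :=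
      ENNReal.mul_ne_top hindMem.eLpNorm_ne_top hg.eLpNorm_ne_top
    have hG_bound : (∫ y, (indB y * |g ((2:ℝ) • x - y)|) ^ cp) ^ (1/cp) ≤ C₀ := by
      rw [hGint_eq, hC₀_def]
      exact ENNReal.toReal_mono hfin (hGnorm x)
    have hG_nonneg : 0 ≤ (∫ y, (indB y * |g ((2:ℝ) • x - y)|) ^ cp) ^ (1/cp) := by
      apply Real.rpow_nonneg
      apply integral_nonneg
      intro y
      exact Real.rpow_nonneg
        (mul_nonneg (Set.indicator_nonneg (fun _ _ => zero_le_one) y) (abs_nonneg _)) _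
    calc ∫ y, |f y| * (indB y * |g ((2:ℝ) • x - y)|)
        ≤ (∫ y, |f y| ^ p) ^ (1/p)
            * (∫ y, (indB y * |g ((2:ℝ) • x - y)|) ^ cp) ^ (1/cp) := holder
      _ ≤ 1 * C₀ := mul_le_mul hf1 hG_bound hG_nonneg zero_le_one
      _ = C₀ := one_mul _
  -- the decay exponents
  set β : ℝ := r * ((n:ℝ) - α) with hβ_def
  have hnα : 0 < (n:ℝ) - α := by linarith
  have hβn : (n:ℝ) < β := by
    have h1 : 1/r < 1 - α/n := by
      rw [hrpq]; linarith
    have h2 : 1 < r * (1 - α/n) := by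
      have h3 := mul_lt_mul_of_pos_left h1 hr0
      rwa [mul_one_div, div_self hr0.ne'] at h3
    have h4 : r * (1 - α/n) * n = r * ((n:ℝ) - α) := by
      field_simp
    nlinarith [mul_lt_mul_of_pos_right h2 hn']
  set δ : ℝ := (β - n)/2 with hδ_def
  have hδ0 : 0 < δ := by rw [hδ_def]; linarith
  set γ : ℝ := β - δ with hγ_def
  have hγn : (n:ℝ) < γ := by rw [hγ_def, hδ_def]; linarith
  have hγ0 : 0 < γ := lt_of_le_of_lt (Nat.cast_nonneg n) hγn
  have hI : Integrable (fun x : EuclideanSpace ℝ (Fin n) => (1 + ‖x‖) ^ (-γ)) volume := by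
    apply integrable_one_add_norm
    simpa [finrank_euclideanSpace_fin] using hγn
  set I : ℝ := ∫ x : EuclideanSpace ℝ (Fin n), (1 + ‖x‖) ^ (-γ) with hI_def
  have hI0 : 0 ≤ I := integral_nonneg fun x => by positivity
  -- the constants
  set C : ℝ := Cb * 2 ^ ((n:ℝ) - α) * C₀ with hC_def
  have hC0 : 0 ≤ C := by positivity
  set K : ℝ := C ^ r * 2 ^ γ * I + 1 with hK_def
  have hK1 : 1 ≤ K := by
    have : 0 ≤ C ^ r * 2 ^ γ * I := by positivity
    linarith
  have hK0 : 0 < K := lt_of_lt_of_le one_pos hK1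
  have hεr : 0 < ε ^ r := Real.rpow_pos_of_pos hε r
  have hKe : 0 < K / ε ^ r := div_pos hK0 hεr
  -- the radius
  set R : ℝ := max (max (2*M + 1) 1) ((K / ε ^ r) ^ (1/δ) + 1) with hR_def
  have hR1 : 1 ≤ R := le_trans (le_max_right _ _) (le_max_left _ _)
  have hR0 : 0 < R := lt_of_lt_of_le one_pos hR1
  have hR2M : 2*M < R := by
    have : 2*M + 1 ≤ R := le_trans (le_max_left _ _) (le_max_left _ _)
    linarith
  have hRδ : R ^ (-δ) < ε ^ r / K := by
    have hRgt : (K / ε ^ r) ^ (1/δ) < R :=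
      lt_of_lt_of_le (lt_add_one _) (le_max_right _ _)
    have hRpow : K / ε ^ r < R ^ δ := by
      calc K / ε ^ r = ((K / ε ^ r) ^ δ⁻¹) ^ δ := (Real.rpow_inv_rpow hKe.le hδ0.ne').symm
        _ < R ^ δ := by
            apply Real.rpow_lt_rpow (Real.rpow_nonneg hKe.le _) _ hδ0
            rwa [one_div] at hRgt
    rw [Real.rpow_neg hR0.le]
    calc (R ^ δ)⁻¹ < (K / ε ^ r)⁻¹ := by
          exact inv_strictAnti₀ hKe hRpow
      _ = ε ^ r / K := by rw [inv_div]
  refine ⟨R, hR0, ?_⟩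
  intro f hf hf1
  -- the pointwise bound in the exterior region
  have hptwise : ∀ x : EuclideanSpace ℝ (Fin n), R < ‖x‖ →
      |∫ y, (b y - b x) * ‖x - y‖ ^ (α - n) * f y * g ((2:ℝ) • x - y)|
        ≤ C * ‖x‖ ^ (α - (n:ℝ)) := by
    intro x hx
    have hx1 : (1:ℝ) < ‖x‖ := lt_of_le_of_lt hR1 hx
    have hx0 : (0:ℝ) < ‖x‖ := lt_trans one_pos hx1
    have hx2M : 2*M < ‖x‖ := lt_trans hR2M hx
    have hbx : b x = 0 := by
      apply image_eq_zero_of_notMem_tsupport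
      intro hmem
      have hxB : x ∈ B := hsupp hmem
      have : ‖x‖ ≤ M := by
        rw [hB_def] at hxB
        simpa [Metric.mem_closedBall, dist_zero_right] using hxB
      linarith
    set Cx : ℝ := Cb * (2 ^ ((n:ℝ) - α) * ‖x‖ ^ (α - (n:ℝ))) with hCx_def
    have hCx0 : 0 ≤ Cx := by positivity
    have hbound : ∀ y, ‖(b y - b x) * ‖x - y‖ ^ (α - (n:ℝ)) * f y * g ((2:ℝ) • x - y)‖
        ≤ Cx * (|f y| * (indB y * |g ((2:ℝ) • x - y)|)) := by
      intro y
      rw [hbx, sub_zero]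
      by_cases hy : y ∈ B
      · have hind1 : indB y = 1 := Set.indicator_of_mem hy _
        have hby : |b y| ≤ Cb := by simpa [Real.norm_eq_abs] using hCb y
        have hyM : ‖y‖ ≤ M := by
          simpa [hB_def, Metric.mem_closedBall, dist_zero_right] using hy
        have hxy : ‖x‖/2 ≤ ‖x - y‖ := by
          have h2 := norm_sub_norm_le x y
          linarith
        have hpow : ‖x - y‖ ^ (α - (n:ℝ)) ≤ (‖x‖/2) ^ (α - (n:ℝ)) :=
          Real.rpow_le_rpow_of_nonpos (by linarith) hxy (by linarith)
        have hhalf : (‖x‖/2) ^ (α - (n:ℝ)) = 2 ^ ((n:ℝ) - α) * ‖x‖ ^ (α - (n:ℝ)) := by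
          rw [Real.div_rpow (norm_nonneg x) (by norm_num : (0:ℝ) ≤ 2), div_eq_mul_inv,
            ← Real.rpow_neg (by norm_num : (0:ℝ) ≤ 2), neg_sub, mul_comm]
        have hpow' : ‖x - y‖ ^ (α - (n:ℝ)) ≤ 2 ^ ((n:ℝ) - α) * ‖x‖ ^ (α - (n:ℝ)) :=
          hpow.trans_eq hhalf
        calc ‖b y * ‖x - y‖ ^ (α - (n:ℝ)) * f y * g ((2:ℝ) • x - y)‖
            = |b y| * (‖x - y‖ ^ (α - (n:ℝ)) * (|f y| * |g ((2:ℝ) • x - y)|)) := by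
              rw [Real.norm_eq_abs, abs_mul, abs_mul, abs_mul,
                abs_of_nonneg (Real.rpow_nonneg (norm_nonneg _) _)]
              ring
          _ ≤ Cb * ((2 ^ ((n:ℝ) - α) * ‖x‖ ^ (α - (n:ℝ))) * (|f y| * |g ((2:ℝ) • x - y)|)) := by
              apply mul_le_mul hby _ (by positivity) hCb0
              apply mul_le_mul_of_nonneg_right hpow' (by positivity)
          _ = Cx * (|f y| * (indB y * |g ((2:ℝ) • x - y)|)) := by
              rw [hind1, hCx_def]; ring
      · have hby : b y = 0 := image_eq_zero_of_notMem_tsupport (fun h => hy (hsupp h))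
        have hind0 : indB y = 0 := Set.indicator_of_notMem hy _
        simp [hby, hind0]
    -- integrability of the majorant
    have hfa : MemLp (fun y => |f y|) (ENNReal.ofReal p) volume := by
      simpa [Real.norm_eq_abs] using hf.norm
    have hint : Integrable (fun y => |f y| * (indB y * |g ((2:ℝ) • x - y)|)) volume := by
      have h5 := (hGmem x).smul hfa (hpqr := ⟨by simpa only [one_div] using hsplit1.symm⟩)
      have h6 : MemLp (fun y => |f y| * (indB y * |g ((2:ℝ) • x - y)|)) 1 volume := by
        simpa [Pi.smul_apply, smul_eq_mul, Pi.mul_def] using h5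
      exact memLp_one_iff_integrable.mp h6
    calc |∫ y, (b y - b x) * ‖x - y‖ ^ (α - (n:ℝ)) * f y * g ((2:ℝ) • x - y)|
        ≤ ∫ y, ‖(b y - b x) * ‖x - y‖ ^ (α - (n:ℝ)) * f y * g ((2:ℝ) • x - y)‖ := by
          rw [← Real.norm_eq_abs]
          exact norm_integral_le_integral_norm _
      _ ≤ ∫ y, Cx * (|f y| * (indB y * |g ((2:ℝ) • x - y)|)) :=
          integral_mono_of_nonneg (Filter.Eventually.of_forall fun y => norm_nonneg _)
            (hint.const_mul Cx) (Filter.Eventually.of_forall hbound)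
      _ = Cx * ∫ y, |f y| * (indB y * |g ((2:ℝ) • x - y)|) := integral_const_mul _ _
      _ ≤ Cx * C₀ := mul_le_mul_of_nonneg_left (key x f hf hf1) hCx0
      _ = C * ‖x‖ ^ (α - (n:ℝ)) := by rw [hCx_def, hC_def]; ring
  -- the outer integral estimate
  set Φ : EuclideanSpace ℝ (Fin n) → ℝ :=
    fun x => (C ^ r * (R ^ (-δ) * 2 ^ γ)) * (1 + ‖x‖) ^ (-γ) with hΦ_def
  have hΦint : Integrable Φ volume := hI.const_mul _
  have hmaj : ∀ x : EuclideanSpace ℝ (Fin n), R < ‖x‖ →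
      |∫ y, (b y - b x) * ‖x - y‖ ^ (α - n) * f y * g ((2:ℝ) • x - y)| ^ r ≤ Φ x := by
    intro x hx
    have hx1 : (1:ℝ) < ‖x‖ := lt_of_le_of_lt hR1 hx
    have hx0 : (0:ℝ) < ‖x‖ := lt_trans one_pos hx1
    have h2 : |∫ y, (b y - b x) * ‖x - y‖ ^ (α - n) * f y * g ((2:ℝ) • x - y)| ^ r
        ≤ (C * ‖x‖ ^ (α - (n:ℝ))) ^ r :=
      Real.rpow_le_rpow (abs_nonneg _) (hptwise x hx) hr0.le
    refine h2.trans ?_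
    have hrw : (C * ‖x‖ ^ (α - (n:ℝ))) ^ r = C ^ r * ‖x‖ ^ (-β) := by
      rw [Real.mul_rpow hC0 (Real.rpow_nonneg (norm_nonneg _) _),
        ← Real.rpow_mul (norm_nonneg x)]
      congr 2
      rw [hβ_def]; ring
    rw [hrw]
    have hsplitβ : ‖x‖ ^ (-β) = ‖x‖ ^ (-δ) * ‖x‖ ^ (-γ) := by
      rw [← Real.rpow_add hx0]
      congr 1
      rw [hγ_def]; ring
    have hbound1 : ‖x‖ ^ (-δ) ≤ R ^ (-δ) :=
      Real.rpow_le_rpow_of_nonpos hR0 hx.le (neg_nonpos.mpr hδ0.le)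
    have hbound2 : ‖x‖ ^ (-γ) ≤ 2 ^ γ * (1 + ‖x‖) ^ (-γ) := by
      have hle : (1 + ‖x‖)/2 ≤ ‖x‖ := by linarith
      have h := Real.rpow_le_rpow_of_nonpos (by linarith : (0:ℝ) < (1 + ‖x‖)/2) hle
        (neg_nonpos.mpr hγ0.le)
      rw [Real.div_rpow (by positivity) (by norm_num : (0:ℝ) ≤ 2), div_eq_mul_inv,
        ← Real.rpow_neg (by norm_num : (0:ℝ) ≤ 2), neg_neg] at h
      calc ‖x‖ ^ (-γ) ≤ (1 + ‖x‖) ^ (-γ) * 2 ^ γ := h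
        _ = 2 ^ γ * (1 + ‖x‖) ^ (-γ) := mul_comm _ _
    rw [hsplitβ, hΦ_def]
    calc C ^ r * (‖x‖ ^ (-δ) * ‖x‖ ^ (-γ))
        ≤ C ^ r * (R ^ (-δ) * (2 ^ γ * (1 + ‖x‖) ^ (-γ))) := by
          apply mul_le_mul_of_nonneg_left _ (Real.rpow_nonneg hC0 r)
          apply mul_le_mul hbound1 hbound2 (Real.rpow_nonneg (norm_nonneg x) _)
            (Real.rpow_nonneg hR0.le _)
      _ = (C ^ r * (R ^ (-δ) * 2 ^ γ)) * (1 + ‖x‖) ^ (-γ) := by ring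
  have hSmeas : MeasurableSet {x : EuclideanSpace ℝ (Fin n) | R < ‖x‖} :=
    measurableSet_lt measurable_const measurable_norm
  calc (∫ x in {x : EuclideanSpace ℝ (Fin n) | R < ‖x‖},
          |∫ y, (b y - b x) * ‖x - y‖ ^ (α - n) * f y * g ((2:ℝ) • x - y)| ^ r)
      ≤ ∫ x in {x : EuclideanSpace ℝ (Fin n) | R < ‖x‖}, Φ x := by
        refine integral_mono_of_nonneg
          (Filter.Eventually.of_forall fun x => Real.rpow_nonneg (abs_nonneg _) r)
          hΦint.integrableOn ?_
        rw [Filter.EventuallyLE, ae_restrict_iff' hSmeas]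
        exact Filter.Eventually.of_forall fun x hx => hmaj x hx
    _ ≤ ∫ x, Φ x := setIntegral_le_integral hΦint
        (Filter.Eventually.of_forall fun x => by
          rw [hΦ_def]
          positivity)
    _ = (C ^ r * (R ^ (-δ) * 2 ^ γ)) * I := by
        rw [hΦ_def, hI_def]
        exact integral_const_mul _ _
    _ = R ^ (-δ) * (C ^ r * 2 ^ γ * I) := by ring
    _ ≤ R ^ (-δ) * K := by
        apply mul_le_mul_of_nonneg_left _ (Real.rpow_nonneg hR0.le _)
        rw [hK_def]; linarith
    _ < ε ^ r := by
        have := mul_lt_mul_of_pos_right hRδ hK0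
        rwa [div_mul_cancel₀ _ hK0.ne'] at this
end
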